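/- Let L ⊆ Σ* and let D be a DFA accepting exactly L, with initial state s; write q·w for evalFrom(q,w). Suppose there exist states q₁ ≠ q₂ and words ω, x, y, z ∈ Σ* such that: s·ω = q₁; q₁·x = q₂ and q₂·x = q₂; q₂·y = q₁; and exactly one of the states q₁·z, q₂·z is accepting (so L is of type (*″)). Then L is not recognized by any PRA-C with any interval. -/

import Mathlib

/-- A real square matrix is doubly stochastic if all entries are nonnegative and
every row and every column sums to 1. -/
def DoublyStochastic {n : ℕ} (A : Matrix (Fin n) (Fin n) ℝ) : Prop :=
  (∀ i j, 0 ≤ A i j) ∧ (∀ i, ∑ j, A i j = 1) ∧ (∀ j, ∑ i, A i j = 1)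

/-- A 1-way probabilistic reversible C-automaton (PRA-C) over input alphabet `α`:
a finite state set `Fin n`, an initial state, a set of accepting states, and
a doubly stochastic matrix for each symbol of the working alphabet
(the letters of `α` together with the end-markers `#` and `$`). -/
structure PRAC (α : Type) where
  n : ℕ
  q0 : Fin n
  F : Finset (Fin n)
  V : α → Matrix (Fin n) (Fin n) ℝ
  Vhash : Matrix (Fin n) (Fin n) ℝ
  Vdollar : Matrix (Fin n) (Fin n) ℝ
  ds : ∀ a, DoublyStochastic (V a)
  ds_hash : DoublyStochastic Vhash
  ds_dollar : DoublyStochastic Vdollar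

namespace PRAC

variable {α : Type}

/-- Acceptance probability of a word `w = σ₁…σ_k`: the total mass on accepting states of
`V_$ ⬝ V_{σ_k} ⬝ ⋯ ⬝ V_{σ₁} ⬝ V_# ⬝ e_{q₀}`. -/
def accProb (A : PRAC α) (w : List α) : ℝ :=
  ∑ q ∈ A.F,
    (A.Vdollar.mulVec
      (w.foldl (fun v a => (A.V a).mulVec v) (A.Vhash.mulVec (Pi.single A.q0 1)))) q

/-- Recognition of a language with interval `(p₁, p₂)`. -/
def Recognizes (A : PRAC α) (L : Set (List α)) (p1 p2 : ℝ) : Prop :=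
  0 ≤ p1 ∧ p1 < p2 ∧ p2 ≤ 1 ∧
  (∀ w ∈ L, p2 ≤ A.accProb w) ∧ (∀ w ∉ L, A.accProb w ≤ p1)

/-- Recognition with probability `p`, i.e. with interval `(1 - p, p)`. -/
def RecognizesWithProb (A : PRAC α) (L : Set (List α)) (p : ℝ) : Prop :=
  A.Recognizes L (1 - p) p

end PRAC

/-!
Doubly stochastic matrices contract the Euclidean norm, and the closure of the powers of such a
matrix is a compact semigroup, hence contains an idempotent; a contractive idempotent fixes every
vector whose norm it does not decrease. Let `K q` be the closure of the distributions the automaton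
reaches on words leading `D` to `q`. The idempotent `E` in the closure of the powers of `V_x` maps
`K q₁` into `K q₂`. An idempotent in the closure of the powers of `E V_y` yields `u ∈ K q₂` with
`‖V_y u‖ ≤ ‖u‖ ≤ ‖E V_y u‖`, so `ξ = V_y u ∈ K q₁` is fixed by `E` and lies in `K q₂` too. But
after the suffix `z`, limits in `K q₁` and in `K q₂` are accepted with probabilities on opposite
sides of the interval `(p₁, p₂)`.
-/

open Matrix Set

theorem exists_isIdempotentElem_mem_closure_range_pow_succ {M : Type*} [Monoid M]
    [TopologicalSpace M] [T2Space M] [ContinuousMul M] (a : M)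
    (hc : IsCompact (closure (range fun k : ℕ => a ^ (k + 1)))) :
    ∃ e ∈ closure (range fun k : ℕ => a ^ (k + 1)), IsIdempotentElem e := by
  have hmul : ∀ x ∈ range (fun k : ℕ => a ^ (k + 1)), ∀ y ∈ range (fun k : ℕ => a ^ (k + 1)),
      x * y ∈ range (fun k : ℕ => a ^ (k + 1)) := by
    rintro _ ⟨k, rfl⟩ _ ⟨l, rfl⟩
    exact ⟨k + l + 1, by rw [← pow_add]; ring_nf⟩
  exact exists_idempotent_in_compact_subsemigroup (continuous_mul_const ·) _
    (range_nonempty _).closure hc fun x hx y hy => map_mem_closure₂ continuous_mul hx hy hmul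

section Contraction

variable {R n : Type*} [Fintype n]

theorem IsIdempotentElem.mulVec_eq_self_of_dotProduct_self_le [CommRing R] [LinearOrder R]
    [IsStrictOrderedRing R] {E : Matrix n n R} (hE : IsIdempotentElem E)
    (hcontr : ∀ v, (E *ᵥ v) ⬝ᵥ (E *ᵥ v) ≤ v ⬝ᵥ v) {v : n → R}
    (hv : v ⬝ᵥ v ≤ (E *ᵥ v) ⬝ᵥ (E *ᵥ v)) : E *ᵥ v = v := by
  set e := E *ᵥ v
  set r := v - e
  have hEe : E *ᵥ e = e := by rw [mulVec_mulVec, hE.eq]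
  have hv_eq : v = e + r := by simp [r]
  -- `E` fixes `e` and kills `r`, so contracting `2 • e + r` gives `0 ≤ 4 (e ⬝ r) + r ⬝ r`,
  -- while `hv` gives `2 (e ⬝ r) + r ⬝ r ≤ 0`.
  have key := hcontr ((2 : R) • e + r)
  rw [mulVec_add, mulVec_smul, hEe, mulVec_sub, hEe, sub_self, add_zero] at key
  rw [hv_eq] at hv
  simp only [add_dotProduct, dotProduct_add, smul_dotProduct, dotProduct_smul, dotProduct_comm r e,
    smul_eq_mul] at key hv
  have hr : r ⬝ᵥ r = 0 :=
    le_antisymm (by nlinarith) (Fintype.sum_nonneg fun i => mul_self_nonneg (r i))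
  rw [hv_eq, dotProduct_self_eq_zero.1 hr, add_zero]

variable [DecidableEq n]

theorem mapsTo_mulVec_of_mem_closure_range_pow_succ [Semiring R] [TopologicalSpace R]
    [IsTopologicalSemiring R] {M P : Matrix n n R} {s t : Set (n → R)}
    (ht : IsClosed t) (hst : MapsTo (M *ᵥ ·) s t) (htt : MapsTo (M *ᵥ ·) t t)
    (hP : P ∈ closure (range fun k : ℕ => M ^ (k + 1))) : MapsTo (P *ᵥ ·) s t := by
  intro v hv
  have hpow (k : ℕ) : M ^ (k + 1) *ᵥ v ∈ t := by
    induction k with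
    | zero => simpa using hst hv
    | succ k ih => rw [pow_succ', ← mulVec_mulVec]; exact htt ih
  have hsub : range (fun k : ℕ => M ^ (k + 1)) ⊆ (· *ᵥ v) ⁻¹' t := range_subset_iff.2 hpow
  exact closure_minimal hsub (ht.preimage (continuous_id.matrix_mulVec continuous_const)) hP

theorem dotProduct_self_mulVec_le_of_mem_doublyStochastic [CommRing R] [LinearOrder R]
    [IsStrictOrderedRing R] {M : Matrix n n R} (hM : M ∈ doublyStochastic R n) (v : n → R) :
    (M *ᵥ v) ⬝ᵥ (M *ᵥ v) ≤ v ⬝ᵥ v := by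
  obtain ⟨hnonneg, hrow, hcol⟩ := mem_doublyStochastic_iff_sum.1 hM
  -- Cauchy–Schwarz in each row, with weights `M i j` summing to `1`
  have hrow_le (i : n) : (M *ᵥ v) i * (M *ᵥ v) i ≤ ∑ j, M i j * (v j * v j) := by
    have := Finset.sum_sq_le_sum_mul_sum_of_sq_le_mul Finset.univ (r := fun j => M i j * v j)
      (fun j _ => hnonneg i j) (fun j _ => mul_nonneg (hnonneg i j) (mul_self_nonneg (v j)))
      (fun j _ => le_of_eq (by ring))
    rwa [hrow, one_mul, sq] at this
  calc (M *ᵥ v) ⬝ᵥ (M *ᵥ v) ≤ ∑ i, ∑ j, M i j * (v j * v j) :=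
        Finset.sum_le_sum fun i _ => hrow_le i
    _ = ∑ j, (∑ i, M i j) * (v j * v j) := by rw [Finset.sum_comm]; simp only [Finset.sum_mul]
    _ = v ⬝ᵥ v := by simp only [hcol, one_mul]; rfl

theorem isCompact_doublyStochastic : IsCompact (doublyStochastic ℝ n : Set (Matrix n n ℝ)) := by
  rw [doublyStochastic_eq_convexHull_permMatrix]
  exact (finite_range fun σ : Equiv.Perm n => σ.permMatrix ℝ).isCompact_convexHull ℝ

theorem exists_isIdempotentElem_mem_closure_range_pow_succ_of_mem_doublyStochastic
    {M : Matrix n n ℝ} (hM : M ∈ doublyStochastic ℝ n) :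
    ∃ E ∈ closure (range fun k : ℕ => M ^ (k + 1)),
      IsIdempotentElem E ∧ E ∈ doublyStochastic ℝ n := by
  have hsub : closure (range fun k : ℕ => M ^ (k + 1)) ⊆ doublyStochastic ℝ n :=
    closure_minimal (range_subset_iff.2 fun k => pow_mem hM _) isCompact_doublyStochastic.isClosed
  obtain ⟨E, hE, hEE⟩ := exists_isIdempotentElem_mem_closure_range_pow_succ M
    (isCompact_doublyStochastic.of_isClosed_subset isClosed_closure hsub)
  exact ⟨E, hE, hEE, hsub hE⟩

theorem dotProduct_self_le_of_mem_closure_range_pow_succ {B P : Matrix n n ℝ}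
    (hB : B ∈ doublyStochastic ℝ n) (hP : P ∈ closure (range fun k : ℕ => B ^ (k + 1)))
    {w : n → ℝ} (hw : P *ᵥ w = w) : w ⬝ᵥ w ≤ (B *ᵥ w) ⬝ᵥ (B *ᵥ w) := by
  have hPw : P *ᵥ w ∈ {u | u ⬝ᵥ u ≤ (B *ᵥ w) ⬝ᵥ (B *ᵥ w)} :=
    mapsTo_mulVec_of_mem_closure_range_pow_succ (s := {w})
    (isClosed_le (continuous_id.dotProduct continuous_id) continuous_const)
    (mapsTo_singleton.2 (le_refl ((B *ᵥ w) ⬝ᵥ (B *ᵥ w))))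
    (fun u hu => (dotProduct_self_mulVec_le_of_mem_doublyStochastic hB u).trans hu) hP rfl
  rwa [hw] at hPw

theorem inter_nonempty_of_mapsTo_mulVec {X Y : Matrix n n ℝ} (hX : X ∈ doublyStochastic ℝ n)
    (hY : Y ∈ doublyStochastic ℝ n) {K₁ K₂ : Set (n → ℝ)} (hK₂ : IsClosed K₂)
    (hX₁ : MapsTo (X *ᵥ ·) K₁ K₂) (hX₂ : MapsTo (X *ᵥ ·) K₂ K₂) (hY₂ : MapsTo (Y *ᵥ ·) K₂ K₁)
    (hK₁ : K₁.Nonempty) : (K₁ ∩ K₂).Nonempty := by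
  obtain ⟨E, hEX, hEE, hE⟩ :=
    exists_isIdempotentElem_mem_closure_range_pow_succ_of_mem_doublyStochastic hX
  have hE₁ : MapsTo (E *ᵥ ·) K₁ K₂ := mapsTo_mulVec_of_mem_closure_range_pow_succ hK₂ hX₁ hX₂ hEX
  have hC : MapsTo ((E * Y) *ᵥ ·) K₂ K₂ := by
    simpa only [Function.comp_def, mulVec_mulVec] using hE₁.comp hY₂
  obtain ⟨P, hPC, hPP, -⟩ :=
    exists_isIdempotentElem_mem_closure_range_pow_succ_of_mem_doublyStochastic (mul_mem hE hY)
  obtain ⟨v, hv⟩ := hK₁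
  obtain ⟨u, hu, hPu⟩ : ∃ u ∈ K₂, P *ᵥ u = u :=
    ⟨P *ᵥ (E *ᵥ v), mapsTo_mulVec_of_mem_closure_range_pow_succ hK₂ hC hC hPC (hE₁ hv),
      by rw [mulVec_mulVec, hPP.eq]⟩
  have hEYu : E *ᵥ (Y *ᵥ u) = Y *ᵥ u := by
    refine hEE.mulVec_eq_self_of_dotProduct_self_le
      (dotProduct_self_mulVec_le_of_mem_doublyStochastic hE) ?_
    calc (Y *ᵥ u) ⬝ᵥ (Y *ᵥ u) ≤ u ⬝ᵥ u := dotProduct_self_mulVec_le_of_mem_doublyStochastic hY u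
      _ ≤ ((E * Y) *ᵥ u) ⬝ᵥ ((E * Y) *ᵥ u) :=
        dotProduct_self_le_of_mem_closure_range_pow_succ (mul_mem hE hY) hPC hPu
      _ = (E *ᵥ (Y *ᵥ u)) ⬝ᵥ (E *ᵥ (Y *ᵥ u)) := by rw [← mulVec_mulVec]
  exact ⟨Y *ᵥ u, hY₂ hu, hEYu ▸ hE₁ (hY₂ hu)⟩

end Contraction

theorem DoublyStochastic.mem_doublyStochastic {n : ℕ} {M : Matrix (Fin n) (Fin n) ℝ}
    (hM : DoublyStochastic M) : M ∈ doublyStochastic ℝ (Fin n) :=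
  mem_doublyStochastic_iff_sum.2 hM

namespace PRAC

variable {α σ : Type} (A : PRAC α)

def wordMatrix (w : List α) : Matrix (Fin A.n) (Fin A.n) ℝ :=
  (w.map A.V).reverse.prod

theorem wordMatrix_append (w t : List α) :
    A.wordMatrix (w ++ t) = A.wordMatrix t * A.wordMatrix w := by
  simp [wordMatrix]

theorem wordMatrix_mem_doublyStochastic (w : List α) :
    A.wordMatrix w ∈ doublyStochastic ℝ (Fin A.n) :=
  Submonoid.list_prod_mem _ (by simpa using fun a _ => (A.ds a).mem_doublyStochastic)

theorem foldl_mulVec_eq_wordMatrix_mulVec (w : List α) (v : Fin A.n → ℝ) :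
    w.foldl (fun v a => A.V a *ᵥ v) v = A.wordMatrix w *ᵥ v := by
  induction w generalizing v with
  | nil => simp [wordMatrix]
  | cons a w ih => simp [ih, wordMatrix, mulVec_mulVec]

def stateAfter (w : List α) : Fin A.n → ℝ :=
  A.wordMatrix w *ᵥ (A.Vhash *ᵥ Pi.single A.q0 1)

def accProbFrom (u : Fin A.n → ℝ) (z : List α) : ℝ :=
  ∑ q ∈ A.F, (A.Vdollar *ᵥ (A.wordMatrix z *ᵥ u)) q

theorem stateAfter_append (w t : List α) :
    A.stateAfter (w ++ t) = A.wordMatrix t *ᵥ A.stateAfter w := by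
  simp only [stateAfter, wordMatrix_append, mulVec_mulVec, mul_assoc]

theorem accProb_append (w z : List α) :
    A.accProb (w ++ z) = A.accProbFrom (A.stateAfter w) z := by
  rw [accProb, accProbFrom, foldl_mulVec_eq_wordMatrix_mulVec, wordMatrix_append,
    ← mulVec_mulVec]
  rfl

theorem continuous_accProbFrom (z : List α) : Continuous fun u => A.accProbFrom u z :=
  continuous_finsetSum _ fun q _ => (continuous_apply q).comp
    (continuous_const.matrix_mulVec (continuous_const.matrix_mulVec continuous_id))

def stateClosure (D : DFA α σ) (q : σ) : Set (Fin A.n → ℝ) :=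
  closure (A.stateAfter '' {w | D.eval w = q})

theorem stateAfter_mem_stateClosure {D : DFA α σ} {w : List α} {q : σ} (h : D.eval w = q) :
    A.stateAfter w ∈ A.stateClosure D q :=
  subset_closure ⟨w, h, rfl⟩

theorem mapsTo_stateClosure {D : DFA α σ} {q q' : σ} {t : List α} (h : D.evalFrom q t = q') :
    MapsTo (A.wordMatrix t *ᵥ ·) (A.stateClosure D q) (A.stateClosure D q') := by
  refine MapsTo.closure ?_ (continuous_const.matrix_mulVec continuous_id)
  rintro _ ⟨w, hw, rfl⟩
  refine ⟨w ++ t, ?_, A.stateAfter_append w t⟩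
  simp only [mem_ofPred_eq, DFA.eval, DFA.evalFrom_of_append] at hw ⊢
  rw [hw, h]

variable {A}

theorem Recognizes.le_accProbFrom {L : Set (List α)} {p₁ p₂ : ℝ} (hA : A.Recognizes L p₁ p₂)
    {D : DFA α σ} (hD : ∀ w, w ∈ D.accepts ↔ w ∈ L) {q : σ} {z : List α}
    (hz : D.evalFrom q z ∈ D.accept) : ∀ u ∈ A.stateClosure D q, p₂ ≤ A.accProbFrom u z := by
  refine fun u hu => closure_minimal ?_ (isClosed_le continuous_const
    (A.continuous_accProbFrom z)) hu
  rintro _ ⟨w, rfl, rfl⟩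
  rw [mem_ofPred_eq, ← accProb_append]
  exact hA.2.2.2.1 _ ((hD _).1 (by rwa [DFA.mem_accepts, DFA.eval, DFA.evalFrom_of_append]))

theorem Recognizes.accProbFrom_le {L : Set (List α)} {p₁ p₂ : ℝ} (hA : A.Recognizes L p₁ p₂)
    {D : DFA α σ} (hD : ∀ w, w ∈ D.accepts ↔ w ∈ L) {q : σ} {z : List α}
    (hz : D.evalFrom q z ∉ D.accept) : ∀ u ∈ A.stateClosure D q, A.accProbFrom u z ≤ p₁ := by
  refine fun u hu => closure_minimal ?_ (isClosed_le (A.continuous_accProbFrom z)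
    continuous_const) hu
  rintro _ ⟨w, rfl, rfl⟩
  rw [mem_ofPred_eq, ← accProb_append]
  exact hA.2.2.2.2 _ fun hL => hz (by rwa [← hD, DFA.mem_accepts, DFA.eval,
    DFA.evalFrom_of_append] at hL)

end PRAC

theorem typeStar''_not_recognizable_by_prac_general {α σ : Type}
    (L : Set (List α)) (D : DFA α σ) (hD : ∀ w, w ∈ D.accepts ↔ w ∈ L)
    (q1 q2 : σ) (ω x y z : List α)
    (hω : D.evalFrom D.start ω = q1)
    (h1x : D.evalFrom q1 x = q2) (h2x : D.evalFrom q2 x = q2)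
    (h2y : D.evalFrom q2 y = q1)
    (hz : Xor' (D.evalFrom q1 z ∈ D.accept) (D.evalFrom q2 z ∈ D.accept)) :
    ¬ ∃ (A : PRAC α) (p1 p2 : ℝ), A.Recognizes L p1 p2 := by
  rintro ⟨A, p1, p2, hA⟩
  obtain ⟨ξ, hξ₁, hξ₂⟩ := inter_nonempty_of_mapsTo_mulVec (A.wordMatrix_mem_doublyStochastic x)
    (A.wordMatrix_mem_doublyStochastic y) isClosed_closure (A.mapsTo_stateClosure h1x)
    (A.mapsTo_stateClosure h2x) (A.mapsTo_stateClosure h2y)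
    ⟨_, A.stateAfter_mem_stateClosure hω⟩
  rcases hz with ⟨hacc, hrej⟩ | ⟨hacc, hrej⟩
  · linarith [hA.2.1, hA.le_accProbFrom hD hacc ξ hξ₁, hA.accProbFrom_le hD hrej ξ hξ₂]
  · linarith [hA.2.1, hA.le_accProbFrom hD hacc ξ hξ₂, hA.accProbFrom_le hD hrej ξ hξ₁]

/-- If a regular language is of type `(*'')`, it is not recognizable by any PRA-C. -/
theorem typeStar''_not_recognizable_by_prac {α σ : Type} [Fintype σ]
    (L : Set (List α)) (D : DFA α σ) (hD : ∀ w, w ∈ D.accepts ↔ w ∈ L)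
    (q1 q2 : σ) (ω x y z : List α) (hne : q1 ≠ q2)
    (hω : D.evalFrom D.start ω = q1)
    (h1x : D.evalFrom q1 x = q2) (h2x : D.evalFrom q2 x = q2)
    (h2y : D.evalFrom q2 y = q1)
    (hz : Xor' (D.evalFrom q1 z ∈ D.accept) (D.evalFrom q2 z ∈ D.accept)) :
    ¬ ∃ (A : PRAC α) (p1 p2 : ℝ), A.Recognizes L p1 p2 :=
  typeStar''_not_recognizable_by_prac_general L D hD q1 q2 ω x y z hω h1x h2x h2y hz
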